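/- Define the operator c on functions ψ : ℝ → ℂ² by (cψ)(x) = 2i γ₊ ψ′(x) + β γ¹ ψ(x). Then for every twice-differentiable ψ : ℝ → ℂ²: (i) c anticommutes with the harmonic Lévy-Leblond Hamiltonian, H_LL(cψ)(x) + c(H_LLψ)(x) = 0 for all x; (ii) c squares to β² times the identity, c(cψ)(x) = β² ψ(x) for all x; and (iii) 2 H_LL(γ₊ψ)(x) = β ψ(x) − (cψ)(x) for all x (so that c agrees with β·Id − 2H_LLγ₊ as operators). -/

import Mathlib

/-!
After the product rule, each of the three identities is a linear combination of the algebraic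
relations among the gamma matrices: `γ₊² = 0`, `(γ¹)² = 1`, `γ¹γ₊ = γ₊`, the anticommutators
`{γ¹, γ₊} = {γ¹, γ₋} = 0`, `{γ₊, γ₋} = 1`, and `γ₋γ₊ = (1 - γ¹)/2`. In `{H_LL, c}` the
harmonic potential drops out because it enters only through `γ₊`, which squares to zero and
anticommutes with `γ¹`.
-/

open Matrix

noncomputable section

/-- The gamma matrix `γ¹ = [[1,0],[0,−1]]`. -/
def γ1 : Matrix (Fin 2) (Fin 2) ℂ := !![1, 0; 0, -1]

/-- The gamma matrix `γ₊ = [[0,1],[0,0]]`. -/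
def γp : Matrix (Fin 2) (Fin 2) ℂ := !![0, 1; 0, 0]

/-- The gamma matrix `γ₋ = [[0,0],[1,0]]`. -/
def γm : Matrix (Fin 2) (Fin 2) ℂ := !![0, 0; 1, 0]

/-- The harmonic Lévy-Leblond Hamiltonian:
`(H_LL ψ)(x) = β γ₋ ψ(x) − i γ¹ ψ′(x) + (k/2) x² γ₊ ψ(x)`. -/
def HLL (β k : ℝ) (ψ : ℝ → (Fin 2 → ℂ)) : ℝ → (Fin 2 → ℂ) :=
  fun x => (β : ℂ) • γm.mulVec (ψ x) - Complex.I • γ1.mulVec (deriv ψ x)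
    + ((k / 2 * x ^ 2 : ℝ) : ℂ) • γp.mulVec (ψ x)

/-- The lowering operator:
`(bψ)(x) = √(βk/2)·x·ψ(x) + ψ′(x) − i√(k/(2β)) γ₊ ψ(x)`. -/
def lower (β k : ℝ) (ψ : ℝ → (Fin 2 → ℂ)) : ℝ → (Fin 2 → ℂ) :=
  fun x => ((Real.sqrt (β * k / 2) * x : ℝ) : ℂ) • ψ x + deriv ψ x
    - (Complex.I * ((Real.sqrt (k / (2 * β)) : ℝ) : ℂ)) • γp.mulVec (ψ x)

/-- The raising operator:
`(b†ψ)(x) = √(βk/2)·x·ψ(x) − ψ′(x) − i√(k/(2β)) γ₊ ψ(x)`. -/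
def raise (β k : ℝ) (ψ : ℝ → (Fin 2 → ℂ)) : ℝ → (Fin 2 → ℂ) :=
  fun x => ((Real.sqrt (β * k / 2) * x : ℝ) : ℂ) • ψ x - deriv ψ x
    - (Complex.I * ((Real.sqrt (k / (2 * β)) : ℝ) : ℂ)) • γp.mulVec (ψ x)

/-- The operator `c`: `(cψ)(x) = 2i γ₊ ψ′(x) + β γ¹ ψ(x)`. -/
def cOp (β : ℝ) (ψ : ℝ → (Fin 2 → ℂ)) : ℝ → (Fin 2 → ℂ) :=
  fun x => (2 * Complex.I) • γp.mulVec (deriv ψ x) + (β : ℂ) • γ1.mulVec (ψ x)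

section MulVec

theorem HasDerivAt.matrix_mulVec {m n : Type*} [Fintype m] [Fintype n] (A : Matrix m n ℂ)
    {f : ℝ → n → ℂ} {f' : n → ℂ} {x : ℝ} (h : HasDerivAt f f' x) :
    HasDerivAt (fun y => A *ᵥ f y) (A *ᵥ f') x := by
  let L : (n → ℂ) →L[ℝ] (m → ℂ) :=
    LinearMap.toContinuousLinearMap (A.mulVecLin.restrictScalars ℝ)
  exact L.hasFDerivAt.comp_hasDerivAt x h

theorem deriv_matrix_mulVec {m n : Type*} [Fintype m] [Fintype n] (A : Matrix m n ℂ)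
    {f : ℝ → n → ℂ} {x : ℝ} (hf : DifferentiableAt ℝ f x) :
    deriv (fun y => A *ᵥ f y) x = A *ᵥ deriv f x :=
  (hf.hasDerivAt.matrix_mulVec A).deriv

variable {R : Type*} [NonUnitalSemiring R] {l m n : Type*} [Fintype m] [Fintype n]

theorem mulVec_mulVec_of_mul_eq {A : Matrix l m R} {B : Matrix m n R} {S : Matrix l n R}
    (h : A * B = S) (v : n → R) : A *ᵥ (B *ᵥ v) = S *ᵥ v := by
  rw [← h, mulVec_mulVec]

theorem mulVec_mulVec_add_mulVec_mulVec {A C : Matrix l m R} {B D : Matrix m n R}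
    {S : Matrix l n R} (h : A * B + C * D = S) (v : n → R) :
    A *ᵥ (B *ᵥ v) + C *ᵥ (D *ᵥ v) = S *ᵥ v := by
  rw [← h, add_mulVec, mulVec_mulVec, mulVec_mulVec]

end MulVec

theorem γp_mul_γp : γp * γp = 0 := by
  ext i j
  fin_cases i <;> fin_cases j <;> simp [γp, mul_apply]

theorem γ1_mul_γ1 : γ1 * γ1 = 1 := by
  ext i j
  fin_cases i <;> fin_cases j <;> simp [γ1, mul_apply]

theorem γ1_mul_γp : γ1 * γp = γp := by
  ext i j
  fin_cases i <;> fin_cases j <;> simp [γ1, γp, mul_apply]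

theorem γ1_mul_γp_add_γp_mul_γ1 : γ1 * γp + γp * γ1 = 0 := by
  ext i j
  fin_cases i <;> fin_cases j <;> simp [γ1, γp]

theorem γ1_mul_γm_add_γm_mul_γ1 : γ1 * γm + γm * γ1 = 0 := by
  ext i j
  fin_cases i <;> fin_cases j <;> simp [γ1, γm]

theorem γp_mul_γm_add_γm_mul_γp : γp * γm + γm * γp = 1 := by
  ext i j
  fin_cases i <;> fin_cases j <;> simp [γp, γm]

theorem γm_mul_γp : γm * γp = (2⁻¹ : ℂ) • (1 - γ1) := by
  ext i j
  fin_cases i <;> fin_cases j <;> norm_num [γ1, γp, γm]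

section Derivatives

variable {ψ : ℝ → Fin 2 → ℂ} {x : ℝ}

theorem deriv_cOp (β : ℝ) (h1 : DifferentiableAt ℝ ψ x) (h2 : DifferentiableAt ℝ (deriv ψ) x) :
    deriv (cOp β ψ) x
      = (2 * Complex.I) • γp *ᵥ deriv (deriv ψ) x + (β : ℂ) • γ1 *ᵥ deriv ψ x :=
  (((h2.hasDerivAt.matrix_mulVec γp).const_smul (2 * Complex.I)).add
    ((h1.hasDerivAt.matrix_mulVec γ1).const_smul (β : ℂ))).deriv

theorem deriv_HLL (β k : ℝ) (h1 : DifferentiableAt ℝ ψ x)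
    (h2 : DifferentiableAt ℝ (deriv ψ) x) :
    deriv (HLL β k ψ) x
      = (β : ℂ) • γm *ᵥ deriv ψ x - Complex.I • γ1 *ᵥ deriv (deriv ψ) x
        + (((k / 2 * x ^ 2 : ℝ) : ℂ) • γp *ᵥ deriv ψ x + ((k * x : ℝ) : ℂ) • γp *ᵥ ψ x) := by
  have hpot : HasDerivAt (fun y : ℝ => ((k / 2 * y ^ 2 : ℝ) : ℂ)) ((k * x : ℝ) : ℂ) x := by
    refine (((hasDerivAt_pow 2 x).const_mul (k / 2)).congr_deriv ?_).ofReal_comp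
    ring
  exact ((((h1.hasDerivAt.matrix_mulVec γm).const_smul (β : ℂ)).sub
    ((h2.hasDerivAt.matrix_mulVec γ1).const_smul Complex.I)).add
    (hpot.smul (h1.hasDerivAt.matrix_mulVec γp))).deriv

end Derivatives

section Relations

open Complex

variable {β k : ℝ} {ψ : ℝ → Fin 2 → ℂ} {x : ℝ}

theorem HLL_cOp_add_cOp_HLL (h1 : DifferentiableAt ℝ ψ x)
    (h2 : DifferentiableAt ℝ (deriv ψ) x) :
    HLL β k (cOp β ψ) x + cOp β (HLL β k ψ) x = 0 := by
  simp only [HLL, cOp]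
  rw [deriv_cOp β h1 h2, deriv_HLL β k h1 h2]
  simp only [mulVec_add, mulVec_sub, mulVec_smul]
  linear_combination (norm := (simp only [one_mulVec, zero_mulVec]; module))
    (2 * I * β) • mulVec_mulVec_add_mulVec_mulVec γp_mul_γm_add_γm_mul_γp (deriv ψ x)
    + (β ^ 2 : ℂ) • mulVec_mulVec_add_mulVec_mulVec γ1_mul_γm_add_γm_mul_γ1 (ψ x)
    - (2 * I * I) •
      mulVec_mulVec_add_mulVec_mulVec γ1_mul_γp_add_γp_mul_γ1 (deriv (deriv ψ) x)
    + ((k / 2 * x ^ 2 : ℝ) * β : ℂ) •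
      mulVec_mulVec_add_mulVec_mulVec γ1_mul_γp_add_γp_mul_γ1 (ψ x)
    - (2 * I * β) • mulVec_mulVec_of_mul_eq γ1_mul_γ1 (deriv ψ x)
    + (2 * I * (k * x ^ 2 : ℝ)) • mulVec_mulVec_of_mul_eq γp_mul_γp (deriv ψ x)
    + (2 * I * (k * x : ℝ)) • mulVec_mulVec_of_mul_eq γp_mul_γp (ψ x)

theorem cOp_cOp (h1 : DifferentiableAt ℝ ψ x) (h2 : DifferentiableAt ℝ (deriv ψ) x) :
    cOp β (cOp β ψ) x = ((β ^ 2 : ℝ) : ℂ) • ψ x := by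
  simp only [cOp]
  rw [deriv_cOp β h1 h2]
  simp only [mulVec_add, mulVec_smul]
  linear_combination (norm := (simp only [one_mulVec, zero_mulVec]; push_cast; module))
    (2 * I * 2 * I) • mulVec_mulVec_of_mul_eq γp_mul_γp (deriv (deriv ψ) x)
    + (2 * I * β) • mulVec_mulVec_add_mulVec_mulVec γ1_mul_γp_add_γp_mul_γ1 (deriv ψ x)
    + (β ^ 2 : ℂ) • mulVec_mulVec_of_mul_eq γ1_mul_γ1 (ψ x)

theorem two_smul_HLL_γp_mulVec (h1 : DifferentiableAt ℝ ψ x) :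
    (2 : ℂ) • HLL β k (fun y => γp *ᵥ ψ y) x = (β : ℂ) • ψ x - cOp β ψ x := by
  simp only [HLL, cOp]
  rw [deriv_matrix_mulVec γp h1]
  linear_combination
    (norm := (simp only [smul_mulVec, sub_mulVec, one_mulVec, zero_mulVec]; module))
    (2 * β : ℂ) • mulVec_mulVec_of_mul_eq γm_mul_γp (ψ x)
    - (2 * I) • mulVec_mulVec_of_mul_eq γ1_mul_γp (deriv ψ x)
    + (2 * (k / 2 * x ^ 2 : ℝ) : ℂ) • mulVec_mulVec_of_mul_eq γp_mul_γp (ψ x)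

end Relations

theorem cOp_relations_general (β k : ℝ)
    (ψ : ℝ → (Fin 2 → ℂ))
    (hψ1 : Differentiable ℝ ψ) (hψ2 : Differentiable ℝ (deriv ψ)) :
    (∀ x : ℝ, HLL β k (cOp β ψ) x + cOp β (HLL β k ψ) x = 0) ∧
    (∀ x : ℝ, cOp β (cOp β ψ) x = ((β ^ 2 : ℝ) : ℂ) • ψ x) ∧
    (∀ x : ℝ, (2 : ℂ) • HLL β k (fun y => γp.mulVec (ψ y)) x
      = (β : ℂ) • ψ x - cOp β ψ x) :=
  ⟨fun x => HLL_cOp_add_cOp_HLL (hψ1 x) (hψ2 x), fun x => cOp_cOp (hψ1 x) (hψ2 x),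
    fun x => two_smul_HLL_γp_mulVec (hψ1 x)⟩

/-- For every twice-differentiable `ψ : ℝ → ℂ²`:
(i) `c` anticommutes with the harmonic Lévy-Leblond Hamiltonian;
(ii) `c² = β²·Id`; and (iii) `2 H_LL(γ₊ψ) = βψ − cψ`. -/
theorem cOp_relations (β k : ℝ) (hβ : 0 < β) (hk : 0 < k)
    (ψ : ℝ → (Fin 2 → ℂ))
    (hψ1 : Differentiable ℝ ψ) (hψ2 : Differentiable ℝ (deriv ψ)) :
    (∀ x : ℝ, HLL β k (cOp β ψ) x + cOp β (HLL β k ψ) x = 0) ∧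
    (∀ x : ℝ, cOp β (cOp β ψ) x = ((β ^ 2 : ℝ) : ℂ) • ψ x) ∧
    (∀ x : ℝ, (2 : ℂ) • HLL β k (fun y => γp.mulVec (ψ y)) x
      = (β : ℂ) • ψ x - cOp β ψ x) :=
  cOp_relations_general β k ψ hψ1 hψ2

end
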